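/- arXiv:2407.17836 — 3 statements merged into one kernel-verified Lean document; each statement's English description precedes it below -/
import Mathlib

section
/- Let (p, l) be an affine realization of an incidence geometry (P, L, I). If every infinitesimal motion of (p, l) is trivial (i.e., (p, l) is projectively infinitesimally rigid), then (p, l) is projectively rigid: there is a neighborhood U of (p, l) in (ℝ²)^P × (ℝ²)^L such that for every affine realization (p', l') of (P, L, I) lying in U, the homogenizations (p̂', l̂') and (p̂, l̂) are projectively equivalent. -/
open Matrix Topology

/-- Homogenization: `(v₁, v₂) ↦ (v₁, v₂, 1)`. -/
def hat (v : Fin 2 → ℝ) : Fin 3 → ℝ := Fin.snoc v 1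

/-- An affine realization of the incidence geometry `(P, L, I)`:
`l j ⬝ p i + 1 = 0` for every incidence `(i, j)`. -/
def IsAffRealization {P L : Type*} (I : Set (P × L))
    (p : P → Fin 2 → ℝ) (l : L → Fin 2 → ℝ) : Prop :=
  ∀ ij ∈ I, l ij.2 ⬝ᵥ p ij.1 + 1 = 0

/-- An infinitesimal motion of `(p, l)`: an element of the kernel of the projective
rigidity matrix, i.e. `p i ⬝ l̇ j + l j ⬝ ṗ i = 0` for every incidence `(i, j)`. -/
def IsInfMotion {P L : Type*} (I : Set (P × L))
    (p : P → Fin 2 → ℝ) (l : L → Fin 2 → ℝ)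
    (dp : P → Fin 2 → ℝ) (dl : L → Fin 2 → ℝ) : Prop :=
  ∀ ij ∈ I, p ij.1 ⬝ᵥ dl ij.2 + l ij.2 ⬝ᵥ dp ij.1 = 0

/-- A trivial infinitesimal motion: the linearization of a projective transformation,
given by a `3 × 3` matrix `X`. -/
def IsTrivMotion {P L : Type*}
    (p : P → Fin 2 → ℝ) (l : L → Fin 2 → ℝ)
    (dp : P → Fin 2 → ℝ) (dl : L → Fin 2 → ℝ) : Prop :=
  ∃ X : Matrix (Fin 3) (Fin 3) ℝ,
    (∀ i, dp i = Fin.init (X *ᵥ hat (p i)) - (X *ᵥ hat (p i)) 2 • p i) ∧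
    (∀ j, dl j = -(Fin.init (Xᵀ *ᵥ hat (l j))) + (Xᵀ *ᵥ hat (l j)) 2 • l j)

/-- Projective equivalence of two collections of homogeneous coordinates. -/
def ProjEquiv {P L : Type*} (p : P → Fin 3 → ℝ) (l : L → Fin 3 → ℝ)
    (p' : P → Fin 3 → ℝ) (l' : L → Fin 3 → ℝ) : Prop :=
  ∃ (A : GL (Fin 3) ℝ) (lam : P → ℝ) (mu : L → ℝ),
    (∀ i, lam i ≠ 0) ∧ (∀ j, mu j ≠ 0) ∧
    (∀ i, p' i = lam i • ((A : Matrix (Fin 3) (Fin 3) ℝ) *ᵥ p i)) ∧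
    (∀ j, l' j = mu j • (((A⁻¹ : GL (Fin 3) ℝ) : Matrix (Fin 3) (Fin 3) ℝ)ᵀ *ᵥ l j))

/-! The matrices `g` near `1` act on realizations by projective transformations, and every point
of this orbit is projectively equivalent to `(p, l)`. The derivative of the orbit map at `1` is the
space of trivial motions, and the derivative of the incidence equations at `(p, l)` has the
infinitesimal motions as its kernel, so infinitesimal rigidity says that the orbit is tangent to
the whole solution space. Since the incidence equations vanish along the orbit, the inverse
function theorem, applied in a chart adapted to complements of the kernel and of the range of the
derivative of the orbit map, shows that every solution near `(p, l)` lies on the orbit. -/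

open Filter
-- Any submultiplicative norm on matrices would do; the topology of this one is, by construction,
-- the entrywise topology already carried by `Matrix`.
open scoped Matrix.Norms.L2Operator

section LocalSolutions

variable {𝕜 M E G : Type*} [NontriviallyNormedField 𝕜]
  [NormedAddCommGroup M] [NormedSpace 𝕜 M] [NormedAddCommGroup E] [NormedSpace 𝕜 E]
  [NormedAddCommGroup G] [NormedSpace 𝕜 G]

theorem HasFDerivAt.comp_eq_zero_of_eventually_eq_zero
    {φ : M → E} {φ' : M →L[𝕜] E} {a : M} {F : E → G} {D : E →L[𝕜] G}
    (hF : HasFDerivAt F D (φ a)) (hφ : HasFDerivAt φ φ' a) (h : ∀ᶠ x in 𝓝 a, F (φ x) = 0) :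
    D.comp φ' = 0 :=
  (hF.comp a hφ).unique ((hasFDerivAt_const 0 a).congr_of_eventuallyEq h)

theorem HasStrictFDerivAt.exists_chart [CompleteSpace 𝕜] [FiniteDimensional 𝕜 M]
    [FiniteDimensional 𝕜 E] {φ : M → E} {φ' : M →L[𝕜] E} {a : M}
    (hφ : HasStrictFDerivAt φ φ' a) {S : Submodule 𝕜 M} (hS : IsCompl S ((φ' : M →ₗ[𝕜] E).ker))
    {W : Submodule 𝕜 E} (hW : IsCompl ((φ' : M →ₗ[𝕜] E).range) W) :
    ∃ e : (S × W) ≃L[𝕜] E, (∀ z, e z = φ' z.1 + z.2) ∧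
      HasStrictFDerivAt (fun z : S × W => φ (a + z.1) + z.2) (e : S × W →L[𝕜] E) 0 := by
  let e₀ := ((φ' : M →ₗ[𝕜] E).kerComplementEquivRange hS).prodCongr (LinearEquiv.refl 𝕜 W) ≪≫ₗ
    Submodule.prodEquivOfIsCompl _ _ hW
  refine ⟨e₀.toContinuousLinearEquiv, fun z => rfl, ?_⟩
  have hshift : HasStrictFDerivAt (fun z : S × W => a + z.1)
      (S.subtypeL.comp (ContinuousLinearMap.fst 𝕜 S W)) 0 :=
    ((S.subtypeL.comp (ContinuousLinearMap.fst 𝕜 S W)).hasStrictFDerivAt).const_add a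
  have hφ0 : HasStrictFDerivAt φ φ' (a + ((0 : S × W).1 : M)) := by simpa using hφ
  have := (HasStrictFDerivAt.comp (f := fun z : S × W => a + (z.1 : M)) 0 hφ0 hshift).fun_add
    (W.subtypeL.comp (ContinuousLinearMap.snd 𝕜 S W)).hasStrictFDerivAt
  exact this.congr_fderiv (ContinuousLinearMap.ext fun z => rfl)

theorem ContinuousLinearMap.exists_leftInverse_on_isCompl_range [CompleteSpace 𝕜]
    [FiniteDimensional 𝕜 G] {φ' : M →L[𝕜] E} {D : E →L[𝕜] G}
    (hDφ : D.comp φ' = 0) (hker : (D : E →ₗ[𝕜] G).ker ≤ (φ' : M →ₗ[𝕜] E).range)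
    {W : Submodule 𝕜 E} (hW : IsCompl ((φ' : M →ₗ[𝕜] E).range) W) :
    ∃ π : G →L[𝕜] W, ∀ x (w : W), π (D (φ' x + w)) = w := by
  have hinj : LinearMap.ker ((D : E →ₗ[𝕜] G) ∘ₗ W.subtype) = ⊥ := by
    rw [LinearMap.ker_comp, ← Submodule.disjoint_iff_comap_eq_bot]
    exact hW.disjoint.symm.mono_right hker
  obtain ⟨π, hπ⟩ := LinearMap.exists_leftInverse_of_injective _ hinj
  refine ⟨π.toContinuousLinearMap, fun x w => ?_⟩
  have hx : D (φ' x) = 0 := congr($hDφ x)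
  simpa [hx] using LinearMap.congr_fun hπ w

theorem HasStrictFDerivAt.prodMk_fst_comp_leftInverse {X Y : Type*} [NormedAddCommGroup X]
    [NormedSpace 𝕜 X] [NormedAddCommGroup Y] [NormedSpace 𝕜 Y] {Θ : X × Y → E}
    {Θ' : X × Y →L[𝕜] E} {z₀ : X × Y} (hΘ : HasStrictFDerivAt Θ Θ' z₀) {F : E → G}
    {D : E →L[𝕜] G} (hF : HasStrictFDerivAt F D (Θ z₀)) {π : G →L[𝕜] Y}
    (hπ : ∀ z, π (D (Θ' z)) = z.2) :
    HasStrictFDerivAt (fun z => (z.1, π (F (Θ z))))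
      (ContinuousLinearEquiv.refl 𝕜 (X × Y) : X × Y →L[𝕜] X × Y) z₀ := by
  have := (ContinuousLinearMap.fst 𝕜 X Y).hasStrictFDerivAt.prodMk
    (π.hasStrictFDerivAt.comp z₀ (hF.comp z₀ hΘ))
  refine this.congr_fderiv (ContinuousLinearMap.ext fun z => ?_)
  rw [ContinuousLinearMap.prod_apply, ContinuousLinearMap.comp_apply,
    ContinuousLinearMap.comp_apply, hπ]
  rfl

theorem nhdsWithin_preimage_zero_le_map_of_ker_le_range [CompleteSpace 𝕜]
    [FiniteDimensional 𝕜 M] [FiniteDimensional 𝕜 E] [FiniteDimensional 𝕜 G]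
    {φ : M → E} {φ' : M →L[𝕜] E} {a : M}
    (hφ : HasStrictFDerivAt φ φ' a) {F : E → G} {D : E →L[𝕜] G} (hF : HasStrictFDerivAt F D (φ a))
    (hFφ : ∀ᶠ x in 𝓝 a, F (φ x) = 0) (hker : (D : E →ₗ[𝕜] G).ker ≤ (φ' : M →ₗ[𝕜] E).range) :
    𝓝[F ⁻¹' {0}] (φ a) ≤ map φ (𝓝 a) := by
  obtain ⟨S, hS⟩ := ((φ' : M →ₗ[𝕜] E).ker).exists_isCompl
  obtain ⟨W, hW⟩ := ((φ' : M →ₗ[𝕜] E).range).exists_isCompl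
  have : CompleteSpace (S × W) := FiniteDimensional.complete 𝕜 _
  obtain ⟨e, he, hΘ⟩ := hφ.exists_chart hS.symm hW
  obtain ⟨π, hπ⟩ := ContinuousLinearMap.exists_leftInverse_on_isCompl_range
    (hF.hasFDerivAt.comp_eq_zero_of_eventually_eq_zero hφ.hasFDerivAt hFφ) hker hW
  set Θ : S × W → E := fun z => φ (a + z.1) + z.2
  have hΘ0 : Θ 0 = φ a := by simp [Θ]
  -- `H` is a local diffeomorphism at `0` taking the same value at a solution `z` and at the
  -- orbit point `(z.1, 0)`.
  set H : S × W → S × W := fun z => (z.1, π (F (Θ z)))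
  have hH : HasStrictFDerivAt H (ContinuousLinearEquiv.refl 𝕜 (S × W) : S × W →L[𝕜] S × W) 0 :=
    hΘ.prodMk_fst_comp_leftInverse (hΘ0 ▸ hF) fun z => by rw [ContinuousLinearEquiv.coe_coe, he, hπ]
  intro t ht
  rw [mem_nhdsWithin_iff_eventually]
  have hshift : Tendsto (fun z : S × W => a + (z.1 : M)) (𝓝 0) (𝓝 a) :=
    (continuous_const.add (continuous_subtype_val.comp continuous_fst)).tendsto' 0 a (by simp)
  have hslice : Tendsto (fun z : S × W => (z.1, (0 : W))) (𝓝 0) (𝓝 0) :=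
    (continuous_fst.prodMk continuous_const).tendsto' 0 0 rfl
  have hgood : ∀ᶠ z in 𝓝 (0 : S × W), hH.localInverse H _ 0 (H z) = z ∧
      hH.localInverse H _ 0 (H (z.1, 0)) = (z.1, 0) ∧ F (φ (a + z.1)) = 0 ∧ φ (a + z.1) ∈ t :=
    hH.eventually_left_inverse.and <| (hslice.eventually hH.eventually_left_inverse).and <|
      (hshift.eventually hFφ).and (hshift.eventually ht)
  filter_upwards [hΘ0 ▸ hΘ.eventually_right_inverse, hΘ0 ▸ hΘ.localInverse_tendsto.eventually hgood]
    with y hy ⟨hinv, hinv₀, hFz, hzt⟩ hFy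
  set z := hΘ.localInverse Θ _ 0 y
  have hHz : H z = H (z.1, 0) := by
    simp only [H, hy, Θ, ZeroMemClass.coe_zero, add_zero, hFz, show F y = 0 from hFy]
  have hz : z = (z.1, 0) := hinv.symm.trans ((congrArg _ hHz).trans hinv₀)
  rw [← hy, hz]
  simpa [Θ] using hzt

end LocalSolutions

@[simp] lemma hat_castSucc (x : Fin 2 → ℝ) (k : Fin 2) : hat x k.castSucc = x k := by
  simp [hat]

@[simp] lemma hat_last (x : Fin 2 → ℝ) : hat x (Fin.last 2) = 1 :=
  Fin.snoc_last (α := fun _ => ℝ) _ _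

@[simp] lemma hat_two (x : Fin 2 → ℝ) : hat x 2 = 1 :=
  hat_last x

lemma hat_dotProduct_hat (x y : Fin 2 → ℝ) : hat x ⬝ᵥ hat y = x ⬝ᵥ y + 1 := by
  simp [dotProduct, Fin.sum_univ_castSucc]

-- Only meaningful when `v 2 ≠ 0`: otherwise `(v 2)⁻¹ = 0`.
noncomputable def dehom (v : Fin 3 → ℝ) : Fin 2 → ℝ := (v 2)⁻¹ • Fin.init v

@[simp] lemma dehom_hat (x : Fin 2 → ℝ) : dehom (hat x) = x := by
  rw [dehom, hat_two, inv_one, one_smul, hat, Fin.init_snoc]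

lemma hat_dehom {v : Fin 3 → ℝ} (hv : v 2 ≠ 0) : hat (dehom v) = (v 2)⁻¹ • v := by
  ext k
  refine Fin.lastCases ?_ (fun k => ?_) k
  · simp [show Fin.last 2 = 2 from rfl, hv]
  · simp [dehom, Fin.init]

noncomputable def dehomDeriv (x : Fin 2 → ℝ) : (Fin 3 → ℝ) →L[ℝ] Fin 2 → ℝ :=
  ContinuousLinearMap.pi (fun k => ContinuousLinearMap.proj k.castSucc) -
    (ContinuousLinearMap.proj 2).smulRight x

@[simp] lemma dehomDeriv_apply (x : Fin 2 → ℝ) (u : Fin 3 → ℝ) :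
    dehomDeriv x u = Fin.init u - u 2 • x := rfl

lemma hasStrictFDerivAt_dehom (x : Fin 2 → ℝ) :
    HasStrictFDerivAt dehom (dehomDeriv x) (hat x) := by
  have hinv : HasStrictFDerivAt (fun v : Fin 3 → ℝ => (v 2)⁻¹)
      (-ContinuousLinearMap.proj (R := ℝ) (φ := fun _ : Fin 3 => ℝ) 2) (hat x) := by
    simpa [Function.comp_def] using
      (hasStrictDerivAt_inv one_ne_zero).comp_hasStrictFDerivAt (hat x)
      (ContinuousLinearMap.proj (R := ℝ) (φ := fun _ : Fin 3 => ℝ) 2).hasStrictFDerivAt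
  have := hinv.fun_smul (ContinuousLinearMap.pi (fun k : Fin 2 =>
    ContinuousLinearMap.proj (R := ℝ) (φ := fun _ : Fin 3 => ℝ) k.castSucc)).hasStrictFDerivAt
  refine this.congr_fderiv (ContinuousLinearMap.ext fun u => ?_)
  ext k
  simp [Fin.init, sub_eq_add_neg]

section MatrixCalculus

variable {n : Type*} [Fintype n] [DecidableEq n]

noncomputable def Matrix.mulVecCLM (v : n → ℝ) : Matrix n n ℝ →L[ℝ] n → ℝ :=
  LinearMap.toContinuousLinearMap ((LinearMap.applyₗ v).comp Matrix.toLin'.toLinearMap)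

@[simp] lemma Matrix.mulVecCLM_apply (v : n → ℝ) (X : Matrix n n ℝ) : mulVecCLM v X = X *ᵥ v := by
  simp [mulVecCLM]

noncomputable def Matrix.transposeMulVecCLM (v : n → ℝ) : Matrix n n ℝ →L[ℝ] n → ℝ :=
  (mulVecCLM v).comp (LinearMap.toContinuousLinearMap (transposeLinearEquiv n n ℝ ℝ).toLinearMap)

@[simp] lemma Matrix.transposeMulVecCLM_apply (v : n → ℝ) (X : Matrix n n ℝ) :
    transposeMulVecCLM v X = Xᵀ *ᵥ v := by
  simp [transposeMulVecCLM]

lemma hasStrictFDerivAt_transpose_ringInverse_mulVec (v : n → ℝ) :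
    HasStrictFDerivAt (fun g : Matrix n n ℝ => (Ring.inverse g)ᵀ *ᵥ v)
      (-transposeMulVecCLM v) 1 := by
  have := (transposeMulVecCLM v).hasStrictFDerivAt.comp (1 : Matrix n n ℝ)
    (by simpa using hasStrictFDerivAt_ringInverse (𝕜 := ℝ) (1 : (Matrix n n ℝ)ˣ))
  refine this.congr_fderiv (ContinuousLinearMap.ext fun X => ?_)
  simp

lemma dotProduct_transpose_mulVec_mulVec {R : Type*} [CommRing R] {A B : Matrix n n R}
    (h : B * A = 1) (u v : n → R) : (Bᵀ *ᵥ u) ⬝ᵥ (A *ᵥ v) = u ⬝ᵥ v := by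
  rw [dotProduct_mulVec, mulVec_transpose, vecMul_vecMul, h, vecMul_one]

end MatrixCalculus

section ProjectiveAction

variable {P L : Type*}

theorem IsAffRealization.of_projEquiv {I : Set (P × L)} {p : P → Fin 2 → ℝ} {l : L → Fin 2 → ℝ}
    {p' : P → Fin 2 → ℝ} {l' : L → Fin 2 → ℝ} (h : IsAffRealization I p l)
    (he : ProjEquiv (fun i => hat (p i)) (fun j => hat (l j))
      (fun i => hat (p' i)) (fun j => hat (l' j))) :
    IsAffRealization I p' l' := by
  obtain ⟨A, lam, mu, -, -, hp, hl⟩ := he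
  intro ij hij
  have hA : ((A⁻¹ : GL (Fin 3) ℝ) : Matrix (Fin 3) (Fin 3) ℝ) * A = 1 := A.inv_mul
  have := congrArg (mu ij.2 * lam ij.1 * ·) (h ij hij)
  beta_reduce at hp hl
  rw [← hat_dotProduct_hat, hp, hl, smul_dotProduct, dotProduct_smul, smul_eq_mul, smul_eq_mul,
    dotProduct_transpose_mulVec_mulVec hA, hat_dotProduct_hat]
  simpa [mul_assoc] using this

noncomputable def projAction (p : P → Fin 2 → ℝ) (l : L → Fin 2 → ℝ)
    (g : Matrix (Fin 3) (Fin 3) ℝ) : (P → Fin 2 → ℝ) × (L → Fin 2 → ℝ) :=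
  (fun i => dehom (g *ᵥ hat (p i)), fun j => dehom ((Ring.inverse g)ᵀ *ᵥ hat (l j)))

@[simp] lemma projAction_one (p : P → Fin 2 → ℝ) (l : L → Fin 2 → ℝ) :
    projAction p l 1 = (p, l) := by
  simp [projAction]

def projActionDomain (p : P → Fin 2 → ℝ) (l : L → Fin 2 → ℝ) : Set (Matrix (Fin 3) (Fin 3) ℝ) :=
  {g | IsUnit g ∧ (∀ i, (g *ᵥ hat (p i)) 2 ≠ 0) ∧ ∀ j, ((Ring.inverse g)ᵀ *ᵥ hat (l j)) 2 ≠ 0}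

lemma projEquiv_projAction {p : P → Fin 2 → ℝ} {l : L → Fin 2 → ℝ} {g : Matrix (Fin 3) (Fin 3) ℝ}
    (hg : g ∈ projActionDomain p l) :
    ProjEquiv (fun i => hat (p i)) (fun j => hat (l j))
      (fun i => hat ((projAction p l g).1 i)) (fun j => hat ((projAction p l g).2 j)) := by
  obtain ⟨hunit, hp, hl⟩ := hg
  refine ⟨hunit.unit, _, _, fun i => inv_ne_zero (hp i), fun j => inv_ne_zero (hl j),
    fun i => hat_dehom (hp i), fun j => ?_⟩
  rw [← Ring.inverse_unit, hunit.unit_spec]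
  exact hat_dehom (hl j)

lemma projActionDomain_mem_nhds_one [Finite P] [Finite L] (p : P → Fin 2 → ℝ)
    (l : L → Fin 2 → ℝ) : projActionDomain p l ∈ 𝓝 1 := by
  refine Filter.inter_mem (Units.isOpen.mem_nhds isUnit_one)
    (Filter.inter_mem (eventually_all.2 fun i => ?_) (eventually_all.2 fun j => ?_))
  · exact ((continuous_apply 2).comp (mulVecCLM (hat (p i))).continuous).continuousAt.eventually_ne
      (by simp)
  · exact ((continuous_apply 2).continuousAt.comp
      (hasStrictFDerivAt_transpose_ringInverse_mulVec (hat (l j))).continuousAt).eventually_ne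
      (by simp)

noncomputable def trivialMotionMap (p : P → Fin 2 → ℝ) (l : L → Fin 2 → ℝ) :
    Matrix (Fin 3) (Fin 3) ℝ →L[ℝ] (P → Fin 2 → ℝ) × (L → Fin 2 → ℝ) :=
  (ContinuousLinearMap.pi fun i => (dehomDeriv (p i)).comp (mulVecCLM (hat (p i)))).prod
    (ContinuousLinearMap.pi fun j => -(dehomDeriv (l j)).comp (transposeMulVecCLM (hat (l j))))

lemma hasStrictFDerivAt_projAction [Fintype P] [Fintype L] (p : P → Fin 2 → ℝ) (l : L → Fin 2 → ℝ) :
    HasStrictFDerivAt (projAction p l) (trivialMotionMap p l) 1 := by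
  refine HasStrictFDerivAt.prodMk (hasStrictFDerivAt_pi.2 fun i => ?_)
    (hasStrictFDerivAt_pi.2 fun j => ?_)
  · have hv : (1 : Matrix (Fin 3) (Fin 3) ℝ) *ᵥ hat (p i) = hat (p i) := one_mulVec _
    exact (hv ▸ hasStrictFDerivAt_dehom (p i)).comp 1 (mulVecCLM (hat (p i))).hasStrictFDerivAt
  · have hv : (Ring.inverse (1 : Matrix (Fin 3) (Fin 3) ℝ))ᵀ *ᵥ hat (l j) = hat (l j) := by simp
    have := (hv ▸ hasStrictFDerivAt_dehom (l j)).comp 1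
      (hasStrictFDerivAt_transpose_ringInverse_mulVec (hat (l j)))
    simpa using this

lemma IsTrivMotion.mem_range_trivialMotionMap {p : P → Fin 2 → ℝ} {l : L → Fin 2 → ℝ}
    {dp : P → Fin 2 → ℝ} {dl : L → Fin 2 → ℝ} (h : IsTrivMotion p l dp dl) :
    (dp, dl) ∈ (trivialMotionMap p l : Matrix (Fin 3) (Fin 3) ℝ →ₗ[ℝ] _).range := by
  obtain ⟨X, hp, hl⟩ := h
  refine ⟨X, Prod.ext (funext fun i => ?_) (funext fun j => ?_)⟩
  · simp [trivialMotionMap, hp]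
  · simp [trivialMotionMap, hl, neg_add_eq_sub]

noncomputable def incidenceResidual (I : Set (P × L)) (q : (P → Fin 2 → ℝ) × (L → Fin 2 → ℝ)) :
    P × L → ℝ :=
  fun ij => I.indicator 1 ij * (q.2 ij.2 ⬝ᵥ q.1 ij.1 + 1)

lemma incidenceResidual_eq_zero_iff {I : Set (P × L)} {q : (P → Fin 2 → ℝ) × (L → Fin 2 → ℝ)} :
    incidenceResidual I q = 0 ↔ IsAffRealization I q.1 q.2 := by
  simp [funext_iff, incidenceResidual, IsAffRealization, or_iff_not_imp_left]

noncomputable def rigidityMap [Fintype P] [Fintype L] (I : Set (P × L)) (p : P → Fin 2 → ℝ)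
    (l : L → Fin 2 → ℝ) : (P → Fin 2 → ℝ) × (L → Fin 2 → ℝ) →L[ℝ] P × L → ℝ :=
  LinearMap.toContinuousLinearMap
    { toFun d ij := I.indicator 1 ij * (p ij.1 ⬝ᵥ d.2 ij.2 + l ij.2 ⬝ᵥ d.1 ij.1)
      map_add' d e := by ext; simp [dotProduct_add]; ring
      map_smul' c d := by ext; simp [dotProduct_smul]; ring }

lemma mem_ker_rigidityMap_iff [Fintype P] [Fintype L] {I : Set (P × L)} {p : P → Fin 2 → ℝ}
    {l : L → Fin 2 → ℝ} {d : (P → Fin 2 → ℝ) × (L → Fin 2 → ℝ)} :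
    d ∈ (rigidityMap I p l : _ →ₗ[ℝ] P × L → ℝ).ker ↔ IsInfMotion I p l d.1 d.2 := by
  simp [rigidityMap, funext_iff, IsInfMotion, or_iff_not_imp_left]

lemma hasStrictFDerivAt_incidenceResidual [Fintype P] [Fintype L] (I : Set (P × L))
    (p : P → Fin 2 → ℝ) (l : L → Fin 2 → ℝ) :
    HasStrictFDerivAt (incidenceResidual I) (rigidityMap I p l) (p, l) := by
  refine hasStrictFDerivAt_pi'.2 fun ij => ?_
  have hline := ((ContinuousLinearMap.proj ij.2).comp
    (ContinuousLinearMap.snd ℝ (P → Fin 2 → ℝ) (L → Fin 2 → ℝ))).hasStrictFDerivAt (x := (p, l))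
  have hpoint := ((ContinuousLinearMap.proj ij.1).comp
    (ContinuousLinearMap.fst ℝ (P → Fin 2 → ℝ) (L → Fin 2 → ℝ))).hasStrictFDerivAt (x := (p, l))
  have hdot := (dotProductBilin ℝ ℝ).toContinuousBilinearMap.hasStrictFDerivAt_of_bilinear
    hline hpoint
  refine ((hdot.add_const 1).const_mul (I.indicator 1 ij)).congr_fderiv
    (ContinuousLinearMap.ext fun d => ?_)
  simp [rigidityMap, dotProduct_comm]
  ring

end ProjectiveAction

/-- Theorem: if every infinitesimal motion of the affine realization `(p, l)` is
trivial (projective infinitesimal rigidity), then `(p, l)` is projectively rigid: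
in some neighborhood of `(p, l)` in `(ℝ²)^P × (ℝ²)^L`, every affine realization of
`(P, L, I)` has homogenization projectively equivalent to that of `(p, l)`. -/
theorem infRigid_implies_projRigid
    {P L : Type*} [Fintype P] [Fintype L] (I : Set (P × L))
    (p : P → Fin 2 → ℝ) (l : L → Fin 2 → ℝ)
    (hreal : IsAffRealization I p l)
    (hinf : ∀ dp dl, IsInfMotion I p l dp dl → IsTrivMotion p l dp dl) :
    ∃ U ∈ 𝓝 ((p, l) : (P → Fin 2 → ℝ) × (L → Fin 2 → ℝ)),
      ∀ q ∈ U, IsAffRealization I q.1 q.2 →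
        ProjEquiv (fun i => hat (p i)) (fun j => hat (l j))
          (fun i => hat (q.1 i)) (fun j => hat (q.2 j)) := by
  have hdom := projActionDomain_mem_nhds_one p l
  have horbit : ∀ᶠ g in 𝓝 1, incidenceResidual I (projAction p l g) = 0 :=
    mem_of_superset hdom fun g hg =>
      incidenceResidual_eq_zero_iff.2 (hreal.of_projEquiv (projEquiv_projAction hg))
  have hsol := nhdsWithin_preimage_zero_le_map_of_ker_le_range (hasStrictFDerivAt_projAction p l)
    (by simpa using hasStrictFDerivAt_incidenceResidual I p l) horbit
    fun d hd => (hinf d.1 d.2 (mem_ker_rigidityMap_iff.1 hd)).mem_range_trivialMotionMap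
  rw [projAction_one] at hsol
  refine ⟨_, mem_nhdsWithin_iff_eventually.1 (hsol (image_mem_map hdom)), fun q hq hqreal => ?_⟩
  obtain ⟨g, hg, rfl⟩ := hq (incidenceResidual_eq_zero_iff.2 hqreal)
  exact projEquiv_projAction hg
end

section
/- Let (p, l) be an affine realization of an incidence geometry (P, L, I) and let ω : P × L → ℝ satisfy ω(i, j) = 0 whenever (i, j) ∉ I. Then ω is a row dependence of the projective rigidity matrix, i.e., ∑_{j ∈ L} ω(i, j) · l(j) = 0 in ℝ² for every i ∈ P and ∑_{i ∈ P} ω(i, j) · p(i) = 0 in ℝ² for every j ∈ L, if and only if ω is an equilibrium stress of the homogenized realization, i.e., ∑_{j ∈ L} ω(i, j) · l̂(j) = 0 in ℝ³ for every i ∈ P and ∑_{i ∈ P} ω(i, j) · p̂(i) = 0 in ℝ³ for every j ∈ L. In particular, any such ω is purely combinatorial: ∑_{j ∈ L} ω(i, j) = 0 for every i ∈ P and ∑_{i ∈ P} ω(i, j) = 0 for every j ∈ L. -/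
/-!
The homogenizing coordinate of `∑ ω • l̂` is `∑ ω`, so the `ℝ³` equations are the `ℝ²`
equations together with the weight-sum equations. These are implied by the `ℝ²` ones: on an
incidence `l j ⬝ p i = -1`, and off it `ω = 0`, so `∑_j ω(i, j) = -(∑_j ω(i, j) • l j) ⬝ p i`
and `∑_i ω(i, j) = -l j ⬝ (∑_i ω(i, j) • p i)`.
-/

open Matrix

theorem Fin.snoc_eq_zero_iff {M : Type*} [Zero M] {n : ℕ} (x : Fin n → M) (a : M) :
    (Fin.snoc x a : Fin (n + 1) → M) = 0 ↔ x = 0 ∧ a = 0 := by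
  have hzero : (0 : Fin (n + 1) → M) = Fin.snoc 0 0 := by
    ext k
    induction k using Fin.lastCases <;> simp
  rw [hzero, Fin.snoc_inj]

theorem Fin.sum_smul_snoc {ι R M : Type*} [Semiring R] [AddCommMonoid M] [Module R M] {n : ℕ}
    (s : Finset ι) (c : ι → R) (v : ι → Fin n → M) (a : ι → M) :
    ∑ k ∈ s, c k • (Fin.snoc (v k) (a k) : Fin (n + 1) → M) =
      Fin.snoc (∑ k ∈ s, c k • v k) (∑ k ∈ s, c k • a k) := by
  ext m
  induction m using Fin.lastCases <;> simp [Finset.sum_apply]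

theorem sum_smul_hat_eq_zero_iff {ι : Type*} (s : Finset ι) (c : ι → ℝ) (v : ι → Fin 2 → ℝ) :
    ∑ k ∈ s, c k • hat (v k) = 0 ↔ ∑ k ∈ s, c k • v k = 0 ∧ ∑ k ∈ s, c k = 0 := by
  simp only [hat, Fin.sum_smul_snoc, smul_eq_mul, mul_one, Fin.snoc_eq_zero_iff]

section AffRealization

variable {P L : Type*} {I : Set (P × L)} {p : P → Fin 2 → ℝ} {l : L → Fin 2 → ℝ}
  {ω : P × L → ℝ}

theorem IsAffRealization.mul_dotProduct_eq_neg (hreal : IsAffRealization I p l)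
    (hω : ∀ ij, ij ∉ I → ω ij = 0) (i : P) (j : L) :
    ω (i, j) * (l j ⬝ᵥ p i) = -ω (i, j) := by
  by_cases hij : (i, j) ∈ I
  · rw [eq_neg_of_add_eq_zero_left (hreal (i, j) hij)]
    ring
  · simp [hω _ hij]

theorem IsAffRealization.sum_weight_eq_zero_of_point_equilibrium [Fintype L]
    (hreal : IsAffRealization I p l) (hω : ∀ ij, ij ∉ I → ω ij = 0) {i : P}
    (h : ∑ j, ω (i, j) • l j = 0) : ∑ j, ω (i, j) = 0 := by
  calc ∑ j, ω (i, j) = -∑ j, ω (i, j) * (l j ⬝ᵥ p i) := by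
        simp only [hreal.mul_dotProduct_eq_neg hω, Finset.sum_neg_distrib, neg_neg]
    _ = -((∑ j, ω (i, j) • l j) ⬝ᵥ p i) := by
        simp only [sum_dotProduct, smul_dotProduct, smul_eq_mul]
    _ = 0 := by simp [h]

theorem IsAffRealization.sum_weight_eq_zero_of_line_equilibrium [Fintype P]
    (hreal : IsAffRealization I p l) (hω : ∀ ij, ij ∉ I → ω ij = 0) {j : L}
    (h : ∑ i, ω (i, j) • p i = 0) : ∑ i, ω (i, j) = 0 := by
  calc ∑ i, ω (i, j) = -∑ i, ω (i, j) * (l j ⬝ᵥ p i) := by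
        simp only [hreal.mul_dotProduct_eq_neg hω, Finset.sum_neg_distrib, neg_neg]
    _ = -(l j ⬝ᵥ ∑ i, ω (i, j) • p i) := by
        simp only [dotProduct_sum, dotProduct_smul, smul_eq_mul]
    _ = 0 := by simp [h]

end AffRealization

/-- Theorem: let `(p, l)` be an affine realization of `(P, L, I)` and `ω` scalars on
`P × L` vanishing off `I`. Then `ω` is a row dependence of the projective rigidity
matrix (the ℝ²-valued equilibrium equations hold) if and only if `ω` is an
equilibrium stress of the homogenized realization (the ℝ³-valued equilibrium
equations hold). In particular, any such `ω` is purely combinatorial: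
`∑_j ω(i, j) = 0` for every point `i` and `∑_i ω(i, j) = 0` for every line `j`. -/
theorem rowDependence_iff_eqStress
    {P L : Type*} [Fintype P] [Fintype L] (I : Set (P × L))
    (p : P → Fin 2 → ℝ) (l : L → Fin 2 → ℝ)
    (hreal : IsAffRealization I p l)
    (ω : P × L → ℝ) (hω : ∀ ij, ij ∉ I → ω ij = 0) :
    (((∀ i, ∑ j, ω (i, j) • l j = 0) ∧ (∀ j, ∑ i, ω (i, j) • p i = 0)) ↔
      ((∀ i, ∑ j, ω (i, j) • hat (l j) = 0) ∧ (∀ j, ∑ i, ω (i, j) • hat (p i) = 0))) ∧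
    (((∀ i, ∑ j, ω (i, j) • l j = 0) ∧ (∀ j, ∑ i, ω (i, j) • p i = 0)) →
      ((∀ i, ∑ j, ω (i, j) = 0) ∧ (∀ j, ∑ i, ω (i, j) = 0))) := by
  have hweights : ((∀ i, ∑ j, ω (i, j) • l j = 0) ∧ (∀ j, ∑ i, ω (i, j) • p i = 0)) →
      ((∀ i, ∑ j, ω (i, j) = 0) ∧ (∀ j, ∑ i, ω (i, j) = 0)) := fun ⟨hpoint, hline⟩ ↦
    ⟨fun i ↦ hreal.sum_weight_eq_zero_of_point_equilibrium hω (hpoint i),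
      fun j ↦ hreal.sum_weight_eq_zero_of_line_equilibrium hω (hline j)⟩
  simp only [sum_smul_hat_eq_zero_iff, forall_and]
  tauto
end

section
/- Let (P, L, I) be an incidence geometry, p : P → ℝ³, l : L → ℝ³. Let Q be a symmetric orthogonal 3×3 real matrix and π : P ≃ L a bijection such that l(π(i)) = Q p(i) for all i ∈ P, and such that for all i, i' ∈ P, (i, π(i')) ∈ I if and only if (i', π(i)) ∈ I (i.e., π is an autopolarity of the configuration). Call a pair of maps m_P : P → ℝ³, m_L : L → ℝ³ polarity-symmetric if m_L(π(i)) = Q m_P(i) for all i ∈ P. Then for every polarity-symmetric pair (m_P, m_L) and all i, i' ∈ P with (i, π(i')) ∈ I, the equation ⟨p(i), m_L(π(i'))⟩ + ⟨l(π(i')), m_P(i)⟩ = 0 holds if and only if ⟨p(i'), m_L(π(i))⟩ + ⟨l(π(i)), m_P(i')⟩ = 0 holds. Consequently, a polarity-symmetric pair satisfies the infinitesimal motion equations ⟨p(i), m_L(j)⟩ + ⟨l(j), m_P(i)⟩ = 0 for all (i, j) ∈ I if and only if it satisfies them for all incidences in any subset R ⊆ I which, for every i, i' ∈ P with (i, π(i'))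 ∈ I, contains (i, π(i')) or (i', π(i)). -/
open Matrix

/-!
Since `Q` is symmetric it moves freely across the dot product, so for a polarity-symmetric
pair the motion residual `⟨p i, Q mP i'⟩ + ⟨Q p i', mP i⟩` at `(i, σ i')` is literally the
residual at `(i', σ i)`: the equations come in equal pairs, and one of each pair suffices.
-/

theorem dotProduct_mulVec_comm_of_transpose_eq {n R : Type*} [Fintype n] [CommSemiring R]
    {Q : Matrix n n R} (hQ : Qᵀ = Q) (v w : n → R) : v ⬝ᵥ (Q *ᵥ w) = w ⬝ᵥ (Q *ᵥ v) := by
  rw [dotProduct_mulVec, ← vecMul_transpose, hQ, dotProduct_comm]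

theorem motion_residual_polarity_symm {n R P L : Type*} [Fintype n] [CommSemiring R]
    {Q : Matrix n n R} (hQ : Qᵀ = Q) {σ : P ≃ L} {p mP : P → n → R} {l mL : L → n → R}
    (hpol : ∀ i, l (σ i) = Q *ᵥ p i) (hm : ∀ i, mL (σ i) = Q *ᵥ mP i) (i i' : P) :
    p i ⬝ᵥ mL (σ i') + l (σ i') ⬝ᵥ mP i = p i' ⬝ᵥ mL (σ i) + l (σ i) ⬝ᵥ mP i' := by
  simp only [hpol, hm, dotProduct_comm (Q *ᵥ _)]
  rw [dotProduct_mulVec_comm_of_transpose_eq hQ (p i), add_comm,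
    dotProduct_mulVec_comm_of_transpose_eq hQ (mP i)]

theorem forall_mem_iff_forall_mem_of_covers {α : Type*} {E : α → Prop} {I R : Set α}
    (τ : α → α) (hE : ∀ x, E (τ x) → E x) (hRI : R ⊆ I) (hR : ∀ x ∈ I, x ∈ R ∨ τ x ∈ R) :
    (∀ x ∈ I, E x) ↔ ∀ x ∈ R, E x :=
  ⟨fun h x hx => h x (hRI hx), fun h x hx =>
    (hR x hx).elim (h x) fun hτ => hE x (h _ hτ)⟩

theorem polarity_orbit_rigidity_general
    {P L : Type*}
    (I : Set (P × L)) (p : P → Fin 3 → ℝ) (l : L → Fin 3 → ℝ)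
    (Q : Matrix (Fin 3) (Fin 3) ℝ) (hQsym : Qᵀ = Q)
    (σ : P ≃ L) (hpol : ∀ i : P, l (σ i) = Q *ᵥ p i)
    (mP : P → Fin 3 → ℝ) (mL : L → Fin 3 → ℝ)
    (hm : ∀ i : P, mL (σ i) = Q *ᵥ mP i) :
    (∀ i i' : P, (i, σ i') ∈ I →
      (p i ⬝ᵥ mL (σ i') + l (σ i') ⬝ᵥ mP i = 0 ↔
        p i' ⬝ᵥ mL (σ i) + l (σ i) ⬝ᵥ mP i' = 0)) ∧
    (∀ R ⊆ I, (∀ i i' : P, (i, σ i') ∈ I → (i, σ i') ∈ R ∨ (i', σ i) ∈ R) →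
      ((∀ ij ∈ I, p ij.1 ⬝ᵥ mL ij.2 + l ij.2 ⬝ᵥ mP ij.1 = 0) ↔
        (∀ ij ∈ R, p ij.1 ⬝ᵥ mL ij.2 + l ij.2 ⬝ᵥ mP ij.1 = 0))) := by
  have swap := motion_residual_polarity_symm hQsym hpol hm
  refine ⟨fun i i' _ => by rw [swap], fun R hRI hR => ?_⟩
  refine forall_mem_iff_forall_mem_of_covers (fun ij => (σ.symm ij.2, σ ij.1))
    (fun ⟨i, j⟩ h => ?_) hRI (fun ⟨i, j⟩ hij => ?_)
  · simpa only [Equiv.apply_symm_apply] using (swap i (σ.symm j)).trans h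
  · simpa using hR i (σ.symm j) (by simpa using hij)

/-- Theorem: let `(P, L, I)` be an incidence geometry with a configuration
`p : P → ℝ³`, `l : L → ℝ³`, let `Q` be a symmetric orthogonal `3 × 3` matrix and
`σ : P ≃ L` an autopolarity of the configuration (`l (σ i) = Q p i`, and
`(i, σ i') ∈ I ↔ (i', σ i) ∈ I`). Then for every polarity-symmetric pair
`(m_P, m_L)` (i.e. `m_L (σ i) = Q m_P i`), the infinitesimal motion equation at the
incidence `(i, σ i')` holds iff it holds at `(i', σ i)`; consequently `(m_P, m_L)`
satisfies the motion equations at all incidences of `I` iff it satisfies them at all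
incidences of any subset `R ⊆ I` containing, for each incidence `(i, σ i') ∈ I`,
either `(i, σ i')` or `(i', σ i)`. -/
theorem polarity_orbit_rigidity
    {P L : Type*} [Fintype P] [Fintype L]
    (I : Set (P × L)) (p : P → Fin 3 → ℝ) (l : L → Fin 3 → ℝ)
    (Q : Matrix (Fin 3) (Fin 3) ℝ) (hQorth : Qᵀ * Q = 1) (hQsym : Qᵀ = Q)
    (σ : P ≃ L) (hpol : ∀ i : P, l (σ i) = Q *ᵥ p i)
    (hI : ∀ i i' : P, (i, σ i') ∈ I ↔ (i', σ i) ∈ I)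
    (mP : P → Fin 3 → ℝ) (mL : L → Fin 3 → ℝ)
    (hm : ∀ i : P, mL (σ i) = Q *ᵥ mP i) :
    (∀ i i' : P, (i, σ i') ∈ I →
      (p i ⬝ᵥ mL (σ i') + l (σ i') ⬝ᵥ mP i = 0 ↔
        p i' ⬝ᵥ mL (σ i) + l (σ i) ⬝ᵥ mP i' = 0)) ∧
    (∀ R ⊆ I, (∀ i i' : P, (i, σ i') ∈ I → (i, σ i') ∈ R ∨ (i', σ i) ∈ R) →
      ((∀ ij ∈ I, p ij.1 ⬝ᵥ mL ij.2 + l ij.2 ⬝ᵥ mP ij.1 = 0) ↔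
        (∀ ij ∈ R, p ij.1 ⬝ᵥ mL ij.2 + l ij.2 ⬝ᵥ mP ij.1 = 0))) :=
  polarity_orbit_rigidity_general I p l Q hQsym σ hpol mP mL hm
end
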